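/- Let S ⊆ M_2 be the operator system of all 2×2 complex matrices with equal diagonal entries, S = {[[λ, a], [b, λ]] : λ, a, b ∈ ℂ}. Then α(S) = 1, β(S) = 2, γ(S) = 3, cc(S) = 3, and γ(S ⊗ S) ≤ 8 < 9 = γ(S)², where S ⊗ S ⊆ M_4 is the Kronecker tensor product of S with itself. -/

import Mathlib

open Matrix
open scoped ComplexOrder

/-- A tuple of Kraus operators for a quantum channel `M_ι → M_k`:
`r` matrices of size `k × ι` with `∑ Aᵢᴴ Aᵢ = I`. -/
noncomputable def IsKraus {ι : Type*} [Fintype ι] [DecidableEq ι] {k r : ℕ}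
    (A : Fin r → Matrix (Fin k) ι ℂ) : Prop :=
  ∑ i, (A i)ᴴ * A i = 1

/-- The non-commutative confusability graph `S_Φ = span{Aᵢᴴ Aⱼ}` of a channel
given by Kraus operators. -/
noncomputable def confGraph {ι : Type*} [Fintype ι] {k r : ℕ}
    (A : Fin r → Matrix (Fin k) ι ℂ) : Submodule ℂ (Matrix ι ι ℂ) :=
  Submodule.span ℂ {B | ∃ i j, B = (A i)ᴴ * A j}

/-- Quantum complexity `γ(S)`: the least `k` such that `S = S_Φ` for some
quantum channel `Φ : M_ι → M_k`. -/
noncomputable def gammaOS {ι : Type*} [Fintype ι] [DecidableEq ι]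
    (S : Submodule ℂ (Matrix ι ι ℂ)) : ℕ :=
  sInf {k | ∃ r : ℕ, ∃ A : Fin r → Matrix (Fin k) ι ℂ, IsKraus A ∧ confGraph A = S}

/-- Quantum subcomplexity `β(S)`: the least `k` such that `S_Φ ⊆ S` for some
quantum channel `Φ : M_ι → M_k`. -/
noncomputable def betaOS {ι : Type*} [Fintype ι] [DecidableEq ι]
    (S : Submodule ℂ (Matrix ι ι ℂ)) : ℕ :=
  sInf {k | ∃ r : ℕ, ∃ A : Fin r → Matrix (Fin k) ι ℂ, IsKraus A ∧ confGraph A ≤ S}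

/-- Independence number `α(S)`: the largest `m` admitting an `S`-independent family
of `m` nonzero vectors, i.e. with `tr(Bᴴ xₚ xₖᴴ) = 0` for `B ∈ S`, `p ≠ q`. -/
noncomputable def alphaOS {ι : Type*} [Fintype ι] [DecidableEq ι]
    (S : Submodule ℂ (Matrix ι ι ℂ)) : ℕ :=
  sSup {m | ∃ x : Fin m → ι → ℂ, (∀ p, x p ≠ 0) ∧
    ∀ p q, p ≠ q → ∀ B ∈ S, Matrix.trace (Bᴴ * Matrix.vecMulVec (x p) (star (x q))) = 0}

/-- A non-cancelling tuple of Kraus operators: each of them of the form `A · D` with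
`A` entrywise nonnegative (real entries) and `D` an invertible diagonal matrix. -/
noncomputable def IsNonCancelling {ι : Type*} [Fintype ι] [DecidableEq ι] {k r : ℕ}
    (A : Fin r → Matrix (Fin k) ι ℂ) : Prop :=
  ∀ i, ∃ (B : Matrix (Fin k) ι ℝ) (d : ι → ℂ),
    (∀ a b, 0 ≤ B a b) ∧ (∀ j, d j ≠ 0) ∧
    A i = (B.map ((↑) : ℝ → ℂ)) * Matrix.diagonal d

/-- `cc(S) ∈ ℕ ∪ {∞}`: the infimum of the `k` for which some non-cancelling quantum channel
`Φ : M_ι → M_k` has `S_Φ = S`. -/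
noncomputable def ccOS {ι : Type*} [Fintype ι] [DecidableEq ι]
    (S : Submodule ℂ (Matrix ι ι ℂ)) : ℕ∞ :=
  sInf {c : ℕ∞ | ∃ k : ℕ, c = k ∧ ∃ r : ℕ, ∃ A : Fin r → Matrix (Fin k) ι ℂ,
    IsKraus A ∧ IsNonCancelling A ∧ confGraph A = S}

/-- The tensor product of operator systems: the span of the Kronecker products
`A ⊗ B` with `A ∈ S₁`, `B ∈ S₂`. -/
noncomputable def tensorOS {ι₁ ι₂ : Type*} [Fintype ι₁] [DecidableEq ι₁]
    [Fintype ι₂] [DecidableEq ι₂] (S₁ : Submodule ℂ (Matrix ι₁ ι₁ ℂ))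
    (S₂ : Submodule ℂ (Matrix ι₂ ι₂ ℂ)) :
    Submodule ℂ (Matrix (ι₁ × ι₂) (ι₁ × ι₂) ℂ) :=
  Submodule.span ℂ {C | ∃ A ∈ S₁, ∃ B ∈ S₂, C = Matrix.kroneckerMap (· * ·) A B}

/-- The operator system `S_k ⊆ M_k` of all matrices whose diagonal entries are all equal. -/
noncomputable def constDiagOS (k : ℕ) : Submodule ℂ (Matrix (Fin k) (Fin k) ℂ) where
  carrier := {A | ∀ i j, A i i = A j j}
  add_mem' := by intro a b ha hb i j; simp only [Matrix.add_apply, ha i j, hb i j]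
  zero_mem' := by intro i j; simp
  smul_mem' := by intro c a ha i j; simp only [Matrix.smul_apply, ha i j]

/-!
Upper bounds come from label channels: Kraus operators `r^{-1/2} ∑ₓ e_{fᵢ x} eₓᵀ` with injective
labellings `fᵢ`, which are non-cancelling and whose `S_Φ` is spanned by the `0/1` coincidence
patterns `[fᵢ x = fⱼ y]`. Two labellings by `3` symbols realise `S`, four labellings by `8` symbols
realise `S ⊗ S`.

For the lower bounds, let `uᵢ, wᵢ` be the two columns of the `i`-th Kraus operator; `S_Φ ⊆ S` says
that the families `(uᵢ)` and `(wᵢ)` have the same Gram matrix. With values in `M₁` this forces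
`w = 0`, against `∑ |wᵢ|² = 1`. With values in `M₂` it gives a unitary `U` with `wᵢ = U uᵢ`, and
`det U • Uᴴ = tr U • 1 - U` becomes a linear relation between the entries of every element of
`S_Φ`, which `E₀₁ ∈ S` violates.

Two nonzero vectors are never `S`-independent, since `S` contains `1` and every off-diagonal
matrix unit.
-/
theorem LinearIsometry.exists_apply_eq_of_inner_eq {𝕜 V ι : Type*} [RCLike 𝕜]
    [NormedAddCommGroup V] [InnerProductSpace 𝕜 V] [FiniteDimensional 𝕜 V] [Fintype ι]
    {u w : ι → V} (h : ∀ i j, inner 𝕜 (u i) (u j) = inner 𝕜 (w i) (w j)) :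
    ∃ T : V →ₗᵢ[𝕜] V, ∀ i, T (u i) = w i := by
  classical
  set Lu := Fintype.linearCombination 𝕜 u
  set Lw := Fintype.linearCombination 𝕜 w
  have hnorm : ∀ c, ‖Lw c‖ = ‖Lu c‖ := by
    intro c
    have : inner 𝕜 (Lu c) (Lu c) = inner 𝕜 (Lw c) (Lw c) := by
      simp only [Lu, Lw, Fintype.linearCombination_apply, sum_inner, inner_sum,
        inner_smul_left, inner_smul_right, h]
    rw [inner_self_eq_norm_sq_to_K, inner_self_eq_norm_sq_to_K] at this
    have hsq : ‖Lu c‖ ^ 2 = ‖Lw c‖ ^ 2 := by exact_mod_cast this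
    exact ((sq_eq_sq₀ (norm_nonneg _) (norm_nonneg _)).mp hsq).symm
  have hker : LinearMap.ker Lu ≤ LinearMap.ker Lw := fun c hc => by
    rwa [LinearMap.mem_ker, ← norm_eq_zero, hnorm, norm_eq_zero, ← LinearMap.mem_ker]
  set g := (LinearMap.ker Lu).liftQ Lw hker ∘ₗ Lu.quotKerEquivRange.symm.toLinearMap
  have hg : ∀ c, g ⟨Lu c, LinearMap.mem_range_self Lu c⟩ = Lw c := fun c => by
    simp [g, LinearMap.quotKerEquivRange_symm_apply_image]
  let L : LinearMap.range Lu →ₗᵢ[𝕜] V :=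
    { toLinearMap := g
      norm_map' := by
        rintro ⟨_, c, rfl⟩
        change ‖g _‖ = ‖Lu c‖
        rw [hg, hnorm] }
  refine ⟨L.extend, fun i => ?_⟩
  have hLu : Lu (Pi.single i 1) = u i := by simp [Lu]
  have hLw : Lw (Pi.single i 1) = w i := by simp [Lw]
  rw [← hLu, ← hLw, ← hg]
  exact L.extend_apply ⟨Lu (Pi.single i 1), LinearMap.mem_range_self Lu _⟩

theorem Matrix.exists_mem_unitaryGroup_mulVec_eq {n ι : Type*} [Fintype n] [DecidableEq n]
    [Fintype ι] {u w : ι → n → ℂ} (h : ∀ i j, star (u i) ⬝ᵥ u j = star (w i) ⬝ᵥ w j) :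
    ∃ U ∈ unitaryGroup n ℂ, ∀ i, U *ᵥ u i = w i := by
  obtain ⟨T, hT⟩ := LinearIsometry.exists_apply_eq_of_inner_eq (𝕜 := ℂ)
    (u := fun i => WithLp.toLp 2 (u i)) (w := fun i => WithLp.toLp 2 (w i)) fun i j => by
      simp only [EuclideanSpace.inner_toLp_toLp, dotProduct_comm _ (star _), h]
  let b := (EuclideanSpace.basisFun n ℂ).toBasis
  refine ⟨LinearMap.toMatrix b b T.toLinearMap,
    (T.toLinearIsometryEquiv rfl).toMatrix_mem_unitaryGroup _ _, fun i => ?_⟩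
  have := LinearMap.toMatrix_mulVec_repr b b T.toLinearMap (WithLp.toLp 2 (u i))
  rwa [LinearIsometry.coe_toLinearMap, hT] at this

theorem Matrix.det_smul_conjTranspose_of_mem_unitaryGroup {U : Matrix (Fin 2) (Fin 2) ℂ}
    (hU : U ∈ unitaryGroup (Fin 2) ℂ) : U.det • Uᴴ = U.trace • 1 - U := by
  have hadj : U.adjugate = U.trace • 1 - U := by
    rw [adjugate_fin_two, trace_fin_two]
    ext i j
    fin_cases i <;> fin_cases j <;> simp
  calc U.det • Uᴴ = U.adjugate * U * Uᴴ := by rw [adjugate_mul, smul_mul_assoc, one_mul]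
    _ = U.adjugate := by rw [Matrix.mul_assoc, ← star_eq_conjTranspose,
        (mem_unitaryGroup_iff.mp hU), Matrix.mul_one]
    _ = U.trace • 1 - U := hadj

theorem one_mem_constDiagOS (k : ℕ) : (1 : Matrix (Fin k) (Fin k) ℂ) ∈ constDiagOS k :=
  fun i j => by simp

theorem single_mem_constDiagOS {k : ℕ} {i j : Fin k} (hij : i ≠ j) :
    single i j (1 : ℂ) ∈ constDiagOS k :=
  have : ∀ c, ¬ (i = c ∧ j = c) := fun c h => hij (h.1.trans h.2.symm)
  fun a b => by simp [this]

theorem mem_constDiagOS_two {B : Matrix (Fin 2) (Fin 2) ℂ} :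
    B ∈ constDiagOS 2 ↔ B 0 0 = B 1 1 :=
  ⟨fun h => h 0 1, fun h i j => by fin_cases i <;> fin_cases j <;> simp [h]⟩

theorem alphaOS_eq_one_of_single_mem {ι : Type*} [Fintype ι] [DecidableEq ι] [Nonempty ι]
    {S : Submodule ℂ (Matrix ι ι ℂ)} (h1 : 1 ∈ S)
    (hsingle : ∀ {i j : ι}, i ≠ j → single i j 1 ∈ S) : alphaOS S = 1 := by
  have no_pair : ∀ x y : ι → ℂ, x ≠ 0 → y ≠ 0 →
      ¬ ∀ B ∈ S, trace (Bᴴ * vecMulVec x (star y)) = 0 := by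
    intro x y hx hy h
    have hoff : ∀ {i j}, i ≠ j → x i = 0 ∨ y j = 0 := fun hij => by
      simpa [conjTranspose_single, trace_single_mul, vecMulVec_apply] using h _ (hsingle hij)
    obtain ⟨i, hxi⟩ : ∃ i, x i ≠ 0 := Function.ne_iff.mp hx
    have hyj : ∀ j ≠ i, y j = 0 := fun j hji =>
      (hoff (Ne.symm hji)).resolve_left hxi
    have hyi : y i ≠ 0 := fun hyi => hy <| funext fun j => by
      by_cases hji : j = i
      · rw [hji, hyi]; rfl
      · exact hyj j hji
    have hxj : ∀ j ≠ i, x j = 0 := fun j hji =>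
      (hoff hji).resolve_right hyi
    have htrace : x ⬝ᵥ star y = x i * star (y i) :=
      Finset.sum_eq_single i (fun j _ hji => by simp [hxj j hji]) (by simp)
    have := h 1 h1
    rw [conjTranspose_one, Matrix.one_mul, trace_vecMulVec, htrace] at this
    simp_all
  refine IsGreatest.csSup_eq ⟨?_, ?_⟩
  · obtain ⟨i⟩ := ‹Nonempty ι›
    refine ⟨fun _ => Pi.single i 1, fun _ => ?_, fun p q hpq => absurd (Subsingleton.elim p q) hpq⟩
    simp
  · rintro m ⟨x, hx, hind⟩
    by_contra! hm
    exact no_pair _ _ (hx ⟨0, by omega⟩) (hx ⟨1, hm⟩) (hind _ _ (by simp [Fin.ext_iff]))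

theorem not_isKraus_fin_zero {ι : Type*} [Fintype ι] [DecidableEq ι] [Nonempty ι] {r : ℕ}
    (A : Fin r → Matrix (Fin 0) ι ℂ) : ¬ IsKraus A := by
  obtain ⟨i⟩ := ‹Nonempty ι›
  intro hA
  have := congrFun₂ hA i i
  simp [Subsingleton.elim (A _) 0] at this

theorem not_isKraus_fin_one_of_confGraph_le {r : ℕ} (A : Fin r → Matrix (Fin 1) (Fin 2) ℂ)
    (hA : confGraph A ≤ constDiagOS 2) : ¬ IsKraus A := by
  intro hK
  set u := fun i => A i 0 0
  set v := fun i => A i 0 1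
  have gram : ∀ i j, star (u i) * u j = star (v i) * v j := fun i j => by
    simpa [mul_apply] using hA (Submodule.subset_span ⟨i, j, rfl⟩) 0 1
  have huv : ∑ i, star (u i) * v i = 0 := by
    simpa [Matrix.sum_apply, mul_apply] using congrFun₂ hK 0 1
  have hvv : ∑ i, star (v i) * v i = 1 := by
    simpa [Matrix.sum_apply, mul_apply] using congrFun₂ hK 1 1
  have hv : ∀ j, v j = 0 := fun j => calc
    v j = (∑ i, star (v i) * v i) * v j := by rw [hvv, one_mul]
    _ = ∑ i, v i * (star (u i) * u j) := by
      rw [Finset.sum_mul]; exact Finset.sum_congr rfl fun i _ => by rw [gram]; ring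
    _ = (∑ i, star (u i) * v i) * u j := by
      rw [Finset.sum_mul]; exact Finset.sum_congr rfl fun i _ => by ring
    _ = 0 := by rw [huv, zero_mul]
  simp [hv] at hvv

theorem two_le_of_isKraus_of_confGraph_le {k r : ℕ} {A : Fin r → Matrix (Fin k) (Fin 2) ℂ}
    (hK : IsKraus A) (hA : confGraph A ≤ constDiagOS 2) : 2 ≤ k := by
  rcases k with _ | _ | k
  · exact absurd hK (not_isKraus_fin_zero A)
  · exact absurd hK (not_isKraus_fin_one_of_confGraph_le A hA)
  · omega

theorem single_zero_one_not_mem_confGraph {r : ℕ} (A : Fin r → Matrix (Fin 2) (Fin 2) ℂ)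
    (hA : confGraph A ≤ constDiagOS 2) : single 0 1 1 ∉ confGraph A := by
  have gram : ∀ i j, star ((A i)ᵀ 0) ⬝ᵥ (A j)ᵀ 0 = star ((A i)ᵀ 1) ⬝ᵥ (A j)ᵀ 1 := fun i j =>
    hA (Submodule.subset_span ⟨i, j, rfl⟩) 0 1
  obtain ⟨U, hU, hUA⟩ := exists_mem_unitaryGroup_mulVec_eq gram
  have relation : ∀ B ∈ confGraph A, U.det * B 1 0 = U.trace * B 0 0 - B 0 1 := by
    intro B hB
    induction hB using Submodule.span_induction with
    | mem _ hB =>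
      obtain ⟨i, j, rfl⟩ := hB
      change U.det * (star ((A i)ᵀ 1) ⬝ᵥ (A j)ᵀ 0) =
        U.trace * (star ((A i)ᵀ 0) ⬝ᵥ (A j)ᵀ 0) - star ((A i)ᵀ 0) ⬝ᵥ (A j)ᵀ 1
      rw [← hUA i, ← hUA j, star_mulVec, ← dotProduct_mulVec, ← smul_eq_mul, ← dotProduct_smul,
        ← smul_mulVec, det_smul_conjTranspose_of_mem_unitaryGroup hU, sub_mulVec,
        smul_mulVec, one_mulVec, dotProduct_sub, dotProduct_smul, smul_eq_mul]
    | zero => simp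
    | add B C _ _ hB hC => simp only [Matrix.add_apply]; linear_combination hB + hC
    | smul c B _ hB => simp only [Matrix.smul_apply, smul_eq_mul]; linear_combination c * hB
  intro h
  simpa using relation _ h

noncomputable def labelKraus {ι : Type*} {k r : ℕ} (f : Fin r → ι → Fin k) :
    Fin r → Matrix (Fin k) ι ℂ :=
  fun i => (of fun a x => if f i x = a then (√r)⁻¹ else 0 : Matrix (Fin k) ι ℝ).map (↑)

/-- `ℕ`-valued, so that identities between such patterns can be checked by `decide`. -/
def labelPattern {ι : Type*} {k : ℕ} (f g : ι → Fin k) : Matrix ι ι ℕ :=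
  of fun x y => if f x = g y then 1 else 0

section LabelKraus

variable {ι : Type*} {k r : ℕ} (f : Fin r → ι → Fin k)

theorem labelKraus_conjTranspose_mul (i j : Fin r) :
    (labelKraus f i)ᴴ * labelKraus f j = (r : ℂ)⁻¹ • (labelPattern (f i) (f j)).map (↑) := by
  have hsq : ((√r : ℂ)⁻¹ * (√r : ℂ)⁻¹) = (r : ℂ)⁻¹ := by
    rw [← mul_inv, ← Complex.ofReal_mul, Real.mul_self_sqrt r.cast_nonneg, Complex.ofReal_natCast]
  ext x y
  simp only [labelKraus, labelPattern, mul_apply, conjTranspose_apply, map_apply, of_apply,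
    Matrix.smul_apply, smul_eq_mul, apply_ite Complex.ofReal, apply_ite star, star_zero,
    Complex.ofReal_zero, Complex.ofReal_inv, Complex.star_def, map_inv₀, Complex.conj_ofReal,
    ite_mul, mul_ite, zero_mul, mul_zero, mul_one, Finset.sum_ite_eq, Finset.mem_univ, if_true,
    Nat.cast_ite, Nat.cast_one, Nat.cast_zero, hsq]

theorem isKraus_labelKraus [Fintype ι] [DecidableEq ι] [NeZero r]
    (hf : ∀ i, Function.Injective (f i)) : IsKraus (labelKraus f) := by
  have hdiag : ∀ i, (labelPattern (f i) (f i)).map ((↑) : ℕ → ℂ) = 1 := fun i => by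
    ext x y
    simp [labelPattern, one_apply, (hf i).eq_iff]
  simp only [IsKraus, labelKraus_conjTranspose_mul, hdiag, Finset.sum_const, Finset.card_univ,
    Fintype.card_fin]
  rw [← Nat.cast_smul_eq_nsmul ℂ, smul_smul, mul_inv_cancel₀ (NeZero.ne (r : ℂ)), one_smul]

theorem isNonCancelling_labelKraus [Fintype ι] [DecidableEq ι] :
    IsNonCancelling (labelKraus f) := fun i =>
  ⟨of fun a x => if f i x = a then (√r)⁻¹ else 0, 1,
    fun a x => by simp only [of_apply]; split_ifs <;> positivity, fun _ => one_ne_zero,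
    by rw [Pi.one_def, diagonal_one, Matrix.mul_one]; rfl⟩

theorem confGraph_labelKraus [Fintype ι] {β : Type*} (g : β → Matrix ι ι ℕ)
    (hg : ∀ i j, labelPattern (f i) (f j) = 0 ∨ ∃ b, labelPattern (f i) (f j) = g b)
    (hpattern : ∀ b, ∃ i j, labelPattern (f i) (f j) = g b) :
    confGraph (labelKraus f) = Submodule.span ℂ (Set.range fun b => (g b).map (↑)) := by
  apply le_antisymm
  · rw [confGraph, Submodule.span_le]
    rintro _ ⟨i, j, rfl⟩
    rw [labelKraus_conjTranspose_mul]
    refine Submodule.smul_mem _ _ ?_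
    rcases hg i j with h | ⟨b, h⟩
    · simp [h]
    · exact Submodule.subset_span ⟨b, by rw [h]⟩
  · rw [Submodule.span_le]
    rintro _ ⟨b, rfl⟩
    obtain ⟨i, j, h⟩ := hpattern b
    have hr : (r : ℂ) ≠ 0 := Nat.cast_ne_zero.mpr (Fin.pos i).ne'
    have := Submodule.smul_mem _ (r : ℂ) (Submodule.subset_span ⟨i, j, rfl⟩ :
      (labelKraus f i)ᴴ * labelKraus f j ∈ confGraph (labelKraus f))
    rwa [labelKraus_conjTranspose_mul, smul_inv_smul₀ hr, h] at this

end LabelKraus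

def constDiagBasis : Fin 3 → Matrix (Fin 2) (Fin 2) ℕ := ![1, single 0 1 1, single 1 0 1]

theorem constDiagOS_two_eq_span :
    constDiagOS 2 = Submodule.span ℂ (Set.range fun p => (constDiagBasis p).map (↑)) := by
  have hbasis : ∀ p, (constDiagBasis p).map ((↑) : ℕ → ℂ) = ![1, single 0 1 1, single 1 0 1] p := by
    intro p
    fin_cases p
    · exact Matrix.map_one _ Nat.cast_zero Nat.cast_one
    · exact map_single 0 1 1 (Nat.castRingHom ℂ) |>.trans (by simp)
    · exact map_single 1 0 1 (Nat.castRingHom ℂ) |>.trans (by simp)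
  simp only [hbasis]
  apply le_antisymm
  · intro B hB
    have hdecomp : B = B 0 0 • 1 + B 0 1 • single 0 1 1 + B 1 0 • single 1 0 1 := by
      ext i j
      fin_cases i <;> fin_cases j <;> simp [mem_constDiagOS_two.mp hB]
    rw [hdecomp]
    refine add_mem (add_mem ?_ ?_) ?_ <;> refine Submodule.smul_mem _ _ (Submodule.subset_span ?_)
    exacts [⟨0, rfl⟩, ⟨1, rfl⟩, ⟨2, rfl⟩]
  · rw [Submodule.span_le]
    rintro _ ⟨p, rfl⟩
    fin_cases p
    exacts [one_mem_constDiagOS 2, single_mem_constDiagOS (by decide),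
      single_mem_constDiagOS (by decide)]

theorem tensorOS_span_span {ι₁ ι₂ : Type*} [Fintype ι₁] [DecidableEq ι₁] [Fintype ι₂]
    [DecidableEq ι₂] (s₁ : Set (Matrix ι₁ ι₁ ℂ)) (s₂ : Set (Matrix ι₂ ι₂ ℂ)) :
    tensorOS (Submodule.span ℂ s₁) (Submodule.span ℂ s₂) =
      Submodule.span ℂ (Set.image2 (kroneckerMap (· * ·)) s₁ s₂) := by
  have := Submodule.map₂_span_span ℂ (kroneckerBilinear (R := ℂ) (α := ℂ)) s₁ s₂
  rw [Submodule.map₂_eq_span_image2] at this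
  unfold tensorOS
  convert this using 2 <;> ext C <;> simp [Set.mem_image2, eq_comm, kroneckerBilinear]

def constDiagLabels : Fin 2 → Fin 2 → Fin 3 := ![![0, 1], ![2, 0]]

theorem confGraph_labelKraus_constDiagLabels :
    confGraph (labelKraus constDiagLabels) = constDiagOS 2 := by
  rw [constDiagOS_two_eq_span]
  exact confGraph_labelKraus _ _ (by decide) (by decide)

-- Found by computer search.
def tensorLabels : Fin 4 → Fin 2 × Fin 2 → Fin 8 := fun i x =>
  ![![![0, 1], ![2, 3]], ![![1, 4], ![3, 5]], ![![2, 3], ![6, 7]], ![![4, 0], ![5, 2]]] i x.1 x.2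

theorem tensorOS_constDiagOS_two_eq_span :
    tensorOS (constDiagOS 2) (constDiagOS 2) = Submodule.span ℂ (Set.range fun pq : Fin 3 × Fin 3 =>
      (kroneckerMap (· * ·) (constDiagBasis pq.1) (constDiagBasis pq.2)).map (↑)) := by
  rw [constDiagOS_two_eq_span, tensorOS_span_span, Set.image2_range]
  congr! with pq
  ext
  simp

theorem confGraph_labelKraus_tensorLabels :
    confGraph (labelKraus tensorLabels) = tensorOS (constDiagOS 2) (constDiagOS 2) := by
  rw [tensorOS_constDiagOS_two_eq_span]
  exact confGraph_labelKraus _ _ (by decide) (by decide)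

theorem betaOS_constDiagOS_two : betaOS (constDiagOS 2) = 2 := by
  have hid : IsKraus (fun _ : Fin 1 => (1 : Matrix (Fin 2) (Fin 2) ℂ)) := by simp [IsKraus]
  have hle : confGraph (fun _ : Fin 1 => (1 : Matrix (Fin 2) (Fin 2) ℂ)) ≤ constDiagOS 2 := by
    rw [confGraph, Submodule.span_le]
    rintro _ ⟨_, _, rfl⟩
    simpa using one_mem_constDiagOS 2
  exact le_antisymm (Nat.sInf_le ⟨1, _, hid, hle⟩)
    (le_csInf ⟨2, 1, _, hid, hle⟩ fun _ ⟨_, _, hK, hA⟩ => two_le_of_isKraus_of_confGraph_le hK hA)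

theorem three_le_of_isKraus_of_confGraph_eq {k r : ℕ} {A : Fin r → Matrix (Fin k) (Fin 2) ℂ}
    (hK : IsKraus A) (hA : confGraph A = constDiagOS 2) : 3 ≤ k := by
  obtain h | rfl := (two_le_of_isKraus_of_confGraph_le hK hA.le).lt_or_eq'
  · exact h
  · refine absurd ?_ (single_zero_one_not_mem_confGraph A hA.le)
    exact hA ▸ single_mem_constDiagOS (by decide)

theorem gammaOS_constDiagOS_two : gammaOS (constDiagOS 2) = 3 :=
  le_antisymm
    (Nat.sInf_le ⟨2, _, isKraus_labelKraus _ (by decide), confGraph_labelKraus_constDiagLabels⟩)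
    (le_csInf ⟨3, 2, _, isKraus_labelKraus _ (by decide), confGraph_labelKraus_constDiagLabels⟩
      fun _ ⟨_, _, hK, hA⟩ => three_le_of_isKraus_of_confGraph_eq hK hA)

theorem gammaOS_le_ccOS {ι : Type*} [Fintype ι] [DecidableEq ι] (S : Submodule ℂ (Matrix ι ι ℂ)) :
    (gammaOS S : ℕ∞) ≤ ccOS S :=
  le_sInf fun _ ⟨_, hc, r, A, hK, _, hA⟩ => hc ▸ Nat.cast_le.mpr (Nat.sInf_le ⟨r, A, hK, hA⟩)

theorem ccOS_constDiagOS_two : ccOS (constDiagOS 2) = 3 :=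
  le_antisymm
    (sInf_le ⟨3, rfl, 2, _, isKraus_labelKraus _ (by decide), isNonCancelling_labelKraus _,
      confGraph_labelKraus_constDiagLabels⟩)
    (by simpa [gammaOS_constDiagOS_two] using gammaOS_le_ccOS (constDiagOS 2))

theorem gammaOS_tensorOS_constDiagOS_two_le :
    gammaOS (tensorOS (constDiagOS 2) (constDiagOS 2)) ≤ 8 :=
  Nat.sInf_le ⟨4, _, isKraus_labelKraus _ (by decide), confGraph_labelKraus_tensorLabels⟩

/-- for the operator system `S ⊆ M₂` of matrices with equal diagonal
entries, `α(S) = 1`, `β(S) = 2`, `γ(S) = 3`, `cc(S) = 3`, and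
`γ(S ⊗ S) ≤ 8 < 9 = γ(S)²`. -/
theorem small_example :
    alphaOS (constDiagOS 2) = 1 ∧ betaOS (constDiagOS 2) = 2 ∧
    gammaOS (constDiagOS 2) = 3 ∧ ccOS (constDiagOS 2) = (3 : ℕ∞) ∧
    gammaOS (tensorOS (constDiagOS 2) (constDiagOS 2)) ≤ 8 ∧
    gammaOS (tensorOS (constDiagOS 2) (constDiagOS 2)) < gammaOS (constDiagOS 2) ^ 2 ∧
    gammaOS (constDiagOS 2) ^ 2 = 9 := by
  have hγ := gammaOS_constDiagOS_two
  have hγ₂ := gammaOS_tensorOS_constDiagOS_two_le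
  refine ⟨alphaOS_eq_one_of_single_mem (one_mem_constDiagOS 2) single_mem_constDiagOS,
    betaOS_constDiagOS_two, hγ, ccOS_constDiagOS_two, hγ₂, ?_, ?_⟩ <;> rw [hγ] <;> omega
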